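/- Let T be a compact metric space, X a Hilbert space, ω_1,…,ω_M : T → T Borel-measurable maps and R_1,…,R_M ∈ L(X). Define the operator 𝓗 on X-valued measures of bounded variation by 𝓗(ν) = Σ_{i=1}^M R_i* ∘ (ω_i(ν)), where ω_i(ν) is the pushforward of ν under ω_i and R_i* the Hilbert adjoint. Then for every continuous f : T → X, ∫ f d𝓗(ν) = ∫ (Σ_{i=1}^M R_i ∘ f ∘ ω_i) dν. -/

import Mathlib

open MeasureTheory Filter Classical
open scoped ENNReal NNReal

/-- The total variation `|μ|(T)` of a vector measure. -/
noncomputable def totalVar {T X : Type*} [MeasurableSpace T] [NormedAddCommGroup X]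
    (μ : VectorMeasure T X) : ℝ≥0∞ :=
  ⨆ P ∈ {P : Finset (Set T) |
      (∀ A ∈ P, MeasurableSet A) ∧ (P : Set (Set T)).PairwiseDisjoint id},
    ∑ A ∈ P, (‖μ A‖₊ : ℝ≥0∞)

/-- The integral of a simple function against a vector measure:
`∫ (Σ φ_{A_i} x_i) dμ = Σ (x_i, μ(A_i))` (linear in the `x_i`, antilinear in `μ`). -/
noncomputable def simpleInt (𝕜 : Type*) {T X : Type*} [RCLike 𝕜] [MeasurableSpace T]
    [NormedAddCommGroup X] [InnerProductSpace 𝕜 X]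
    (μ : VectorMeasure T X) (g : SimpleFunc T X) : 𝕜 :=
  ∑ x ∈ g.range, (inner 𝕜 (μ (g ⁻¹' {x})) x : 𝕜)

/-- The sesquilinear uniform integral `∫ f dμ` of a totally measurable function `f`
(a uniform limit of simple functions) against a vector measure `μ`, extending the
simple-function integral by uniform limits (junk value `0` otherwise). -/
noncomputable def sesqInt (𝕜 : Type*) {T X : Type*} [RCLike 𝕜] [MeasurableSpace T]
    [NormedAddCommGroup X] [InnerProductSpace 𝕜 X]
    (μ : VectorMeasure T X) (f : T → X) : 𝕜 :=
  if h : ∃ g : ℕ → SimpleFunc T X, TendstoUniformly (fun n => ⇑(g n)) f atTop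
  then limUnder atTop (fun n => simpleInt 𝕜 μ (h.choose n))
  else 0

/-!
On simple functions both sides are finite sums, and they agree because
`⟪R_i* ν(ω_i⁻¹ A), x⟫ = ⟪ν(ω_i⁻¹ A), R_i x⟫`. A continuous `f` on the compact space `T` is a
uniform limit of simple functions `g_n`, and then `Σ R_i ∘ g_n ∘ ω_i` is a sequence of simple
functions converging uniformly to `Σ R_i ∘ f ∘ ω_i`. Since `|∫ g dν| ≤ ‖g‖_∞ |ν|(T)`, the
simple-function integrals against `ν` converge along any uniformly convergent sequence, so the
limit defining the left-hand side equals the right-hand side.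
-/

theorem TendstoUniformly.finset_sum {ι κ α β : Type*} [UniformSpace β] [AddCommGroup β]
    [IsUniformAddGroup β] {l : Filter ι} (s : Finset κ) {F : κ → ι → α → β} {f : κ → α → β}
    (h : ∀ i ∈ s, TendstoUniformly (F i) (f i) l) :
    TendstoUniformly (fun n a => ∑ i ∈ s, F i n a) (fun a => ∑ i ∈ s, f i a) l := by
  induction s using Finset.cons_induction with
  | empty => exact tendsto_const_nhds.tendstoUniformly_const
  | cons a s ha ih =>
    simp only [Finset.sum_cons]
    exact (h a (Finset.mem_cons_self a s)).add (ih fun i hi => h i (Finset.mem_cons_of_mem hi))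

theorem SimpleFunc.coe_finset_sum {T X κ : Type*} [MeasurableSpace T] [AddCommMonoid X]
    (s : Finset κ) (g : κ → SimpleFunc T X) : ⇑(∑ i ∈ s, g i) = ∑ i ∈ s, ⇑(g i) := by
  induction s using Finset.cons_induction with
  | empty => rfl
  | cons a s ha ih => simp only [Finset.sum_cons, SimpleFunc.coe_add, ih]

section UniformApproximation

variable {T X : Type*} [PseudoMetricSpace T] [MeasurableSpace T] [OpensMeasurableSpace T]
  [Nonempty X]

noncomputable def ballApprox (f : T → X) (δ : ℝ) : List T → SimpleFunc T X
  | [] => SimpleFunc.const T (Classical.arbitrary X)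
  | c :: l => SimpleFunc.piecewise (Metric.ball c δ) Metric.isOpen_ball.measurableSet
      (SimpleFunc.const T (f c)) (ballApprox f δ l)

theorem exists_ballApprox_eq (f : T → X) (δ : ℝ) {l : List T} {t : T}
    (ht : ∃ c ∈ l, t ∈ Metric.ball c δ) :
    ∃ c, dist t c < δ ∧ ballApprox f δ l t = f c := by
  induction l with
  | nil => simp at ht
  | cons c l ih =>
    by_cases hc : t ∈ Metric.ball c δ
    · exact ⟨c, hc, by simp [ballApprox, hc]⟩
    · obtain ⟨c', hc', he⟩ := ih <| by
        obtain ⟨c', hc', htc'⟩ := ht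
        rcases List.mem_cons.1 hc' with rfl | hc'
        · exact absurd htc' hc
        · exact ⟨c', hc', htc'⟩
      exact ⟨c', hc', by simpa [ballApprox, hc] using he⟩

theorem exists_simpleFunc_dist_lt [PseudoMetricSpace X] [CompactSpace T] {f : T → X}
    (hf : Continuous f) {ε : ℝ} (hε : 0 < ε) : ∃ g : SimpleFunc T X, ∀ t, dist (f t) (g t) < ε := by
  obtain ⟨δ, hδ, hfδ⟩ :=
    Metric.uniformContinuous_iff.1 (CompactSpace.uniformContinuous_of_continuous hf) ε hε
  obtain ⟨s, -, hs, hcover⟩ := finite_cover_balls_of_compact (isCompact_univ (X := T)) hδ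
  refine ⟨ballApprox f δ hs.toFinset.toList, fun t => ?_⟩
  obtain ⟨c, hc, htc⟩ := Set.mem_iUnion₂.1 (hcover (Set.mem_univ t))
  obtain ⟨c', htc', he⟩ :=
    exists_ballApprox_eq f δ (l := hs.toFinset.toList) ⟨c, by simpa using hc, htc⟩
  exact he ▸ hfδ htc'

theorem exists_seq_simpleFunc_tendstoUniformly [PseudoMetricSpace X] [CompactSpace T]
    {f : T → X} (hf : Continuous f) :
    ∃ g : ℕ → SimpleFunc T X, TendstoUniformly (fun n => ⇑(g n)) f atTop := by
  choose g hg using fun n : ℕ =>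
    exists_simpleFunc_dist_lt (T := T) hf (Nat.one_div_pos_of_nat (α := ℝ) (n := n))
  refine ⟨g, Metric.tendstoUniformly_iff.2 fun ε hε => ?_⟩
  filter_upwards [tendsto_one_div_add_atTop_nhds_zero_nat.eventually (gt_mem_nhds hε)]
    with n hn t
  exact (hg n t).trans hn

end UniformApproximation

theorem sum_nnnorm_apply_fiber_le_totalVar {T X Y : Type*} [MeasurableSpace T]
    [NormedAddCommGroup X] (μ : VectorMeasure T X) (g : SimpleFunc T Y) :
    ∑ y ∈ g.range, (‖μ (g ⁻¹' {y})‖₊ : ℝ≥0∞) ≤ totalVar μ := by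
  have hinj : Set.InjOn (fun y => g ⁻¹' {y}) g.range := by
    rintro _ hx y - hxy
    obtain ⟨t, rfl⟩ := SimpleFunc.mem_range.1 hx
    exact (Set.ext_iff.1 hxy t).1 rfl
  rw [← Finset.sum_image (f := fun A => (‖μ A‖₊ : ℝ≥0∞)) hinj]
  refine le_iSup₂_of_le (g.range.image fun y => g ⁻¹' {y}) ⟨?_, ?_⟩ le_rfl
  · simp only [Finset.mem_image]
    rintro _ ⟨y, -, rfl⟩
    exact g.measurableSet_fiber y
  · rw [Finset.coe_image, hinj.pairwiseDisjoint_image]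
    exact Set.pairwiseDisjoint_fiber g _

section SimpleIntegral

variable {𝕜 T X : Type*} [RCLike 𝕜] [MeasurableSpace T] [NormedAddCommGroup X]
  [InnerProductSpace 𝕜 X]

theorem simpleInt_map_eq_sum {Y : Type*} (μ : VectorMeasure T X) (p : SimpleFunc T Y)
    (φ : Y → X) {s : Finset Y} (hs : p.range ⊆ s) :
    simpleInt 𝕜 μ (p.map φ) = ∑ y ∈ s, inner 𝕜 (μ (p ⁻¹' {y})) (φ y) := by
  have hrange : simpleInt 𝕜 μ (p.map φ) = ∑ y ∈ p.range, inner 𝕜 (μ (p ⁻¹' {y})) (φ y) := by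
    rw [simpleInt, SimpleFunc.range_map]
    refine Finset.sum_image' _ fun b _ => ?_
    rw [SimpleFunc.map_preimage_singleton, ← Finset.set_biUnion_preimage_singleton,
      VectorMeasure.of_biUnion_finset
        ((Set.pairwiseDisjoint_fiber p Set.univ).subset (Set.subset_univ _))
        fun y _ => p.measurableSet_fiber y, sum_inner]
    exact Finset.sum_congr rfl fun y hy => by rw [(Finset.mem_filter.1 hy).2]
  rw [hrange]
  refine Finset.sum_subset hs fun y _ hy => ?_
  rw [Set.preimage_singleton_eq_empty.2 (by simpa using hy), VectorMeasure.empty,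
    inner_zero_left]

theorem simpleInt_add (μ : VectorMeasure T X) (g h : SimpleFunc T X) :
    simpleInt 𝕜 μ (g + h) = simpleInt 𝕜 μ g + simpleInt 𝕜 μ h := by
  let p := g.pair h
  calc simpleInt 𝕜 μ (g + h) = simpleInt 𝕜 μ (p.map fun y => y.1 + y.2) := rfl
    _ = ∑ y ∈ p.range, (inner 𝕜 (μ (p ⁻¹' {y})) y.1 + inner 𝕜 (μ (p ⁻¹' {y})) y.2) := by
      simp only [simpleInt_map_eq_sum μ p _ subset_rfl, inner_add_right]
    _ = simpleInt 𝕜 μ (p.map Prod.fst) + simpleInt 𝕜 μ (p.map Prod.snd) := by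
      rw [Finset.sum_add_distrib, simpleInt_map_eq_sum μ p _ subset_rfl,
        simpleInt_map_eq_sum μ p _ subset_rfl]

variable (𝕜) in
noncomputable def simpleIntAddHom (μ : VectorMeasure T X) : SimpleFunc T X →+ 𝕜 :=
  AddMonoidHom.mk' (simpleInt 𝕜 μ) (simpleInt_add μ)

theorem simpleInt_sub (μ : VectorMeasure T X) (g h : SimpleFunc T X) :
    simpleInt 𝕜 μ (g - h) = simpleInt 𝕜 μ g - simpleInt 𝕜 μ h :=
  map_sub (simpleIntAddHom 𝕜 μ) g h

theorem simpleInt_finset_sum {κ : Type*} (μ : VectorMeasure T X) (s : Finset κ)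
    (g : κ → SimpleFunc T X) :
    simpleInt 𝕜 μ (∑ i ∈ s, g i) = ∑ i ∈ s, simpleInt 𝕜 μ (g i) :=
  map_sum (simpleIntAddHom 𝕜 μ) g s

theorem simpleInt_finset_sum_measure {κ : Type*} (s : Finset κ) (μ : κ → VectorMeasure T X)
    (g : SimpleFunc T X) : simpleInt 𝕜 (∑ i ∈ s, μ i) g = ∑ i ∈ s, simpleInt 𝕜 (μ i) g := by
  simp only [simpleInt, FunLike.coe_sum, Finset.sum_apply, sum_inner]
  exact Finset.sum_comm

theorem norm_simpleInt_le (μ : VectorMeasure T X) (hμ : totalVar μ ≠ ⊤) (g : SimpleFunc T X)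
    {C : ℝ} (hC0 : 0 ≤ C) (hC : ∀ t, ‖g t‖ ≤ C) :
    ‖simpleInt 𝕜 μ g‖ ≤ C * (totalVar μ).toReal := by
  have hfibers : ∑ x ∈ g.range, ‖μ (g ⁻¹' {x})‖ ≤ (totalVar μ).toReal := by
    have := ENNReal.toReal_mono hμ (sum_nnnorm_apply_fiber_le_totalVar μ g)
    rwa [ENNReal.toReal_sum fun _ _ => ENNReal.coe_ne_top] at this
  calc ‖simpleInt 𝕜 μ g‖ ≤ ∑ x ∈ g.range, ‖μ (g ⁻¹' {x})‖ * C := by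
        refine (norm_sum_le _ _).trans (Finset.sum_le_sum fun x hx => ?_)
        obtain ⟨t, rfl⟩ := SimpleFunc.mem_range.1 hx
        exact (norm_inner_le_norm _ _).trans (by gcongr; exact hC t)
    _ ≤ (totalVar μ).toReal * C := by rw [← Finset.sum_mul]; gcongr
    _ = C * (totalVar μ).toReal := mul_comm _ _

theorem tendsto_simpleInt_sub_simpleInt {ι : Type*} {l : Filter ι} (μ : VectorMeasure T X)
    (hμ : totalVar μ ≠ ⊤) {g h : ι → SimpleFunc T X} {f : T → X}
    (hg : TendstoUniformly (fun n => ⇑(g n)) f l) (hh : TendstoUniformly (fun n => ⇑(h n)) f l) :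
    Tendsto (fun n => simpleInt 𝕜 μ (g n) - simpleInt 𝕜 μ (h n)) l (nhds 0) := by
  set V := (totalVar μ).toReal
  have hgh : TendstoUniformly (fun n => ⇑(g n - h n)) 0 l := by
    have := hg.sub hh
    rwa [sub_self] at this
  refine NormedAddGroup.tendsto_nhds_zero.2 fun ε hε => ?_
  have hδ : 0 < ε / (V + 1) := by positivity
  filter_upwards [Metric.tendstoUniformly_iff.1 hgh _ hδ] with n hn
  rw [← simpleInt_sub]
  calc ‖simpleInt 𝕜 μ (g n - h n)‖ ≤ ε / (V + 1) * V :=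
        norm_simpleInt_le μ hμ _ hδ.le fun t => by
          simpa only [Pi.zero_apply, dist_zero_left] using (hn t).le
    _ < ε := by
      rw [div_mul_eq_mul_div, div_lt_iff₀ (by positivity)]
      nlinarith

theorem tendsto_simpleInt_sesqInt (μ : VectorMeasure T X) (hμ : totalVar μ ≠ ⊤)
    {g : ℕ → SimpleFunc T X} {f : T → X}
    (hg : TendstoUniformly (fun n => ⇑(g n)) f atTop) :
    Tendsto (fun n => simpleInt 𝕜 μ (g n)) atTop (nhds (sesqInt 𝕜 μ f)) := by
  have hex : ∃ g : ℕ → SimpleFunc T X, TendstoUniformly (fun n => ⇑(g n)) f atTop := ⟨g, hg⟩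
  have hc := hex.choose_spec
  have hcauchy : CauchySeq fun n => simpleInt 𝕜 μ (hex.choose n) := by
    rw [cauchySeq_iff_tendsto_dist_atTop_0, ← prod_atTop_atTop_eq]
    simp only [dist_eq_norm]
    exact tendsto_zero_iff_norm_tendsto_zero.1 <| tendsto_simpleInt_sub_simpleInt μ hμ
      (fun u hu => tendsto_fst.eventually (hc u hu)) (fun u hu => tendsto_snd.eventually (hc u hu))
  obtain ⟨L, hL⟩ := cauchySeq_tendsto_of_complete hcauchy
  have hsesq : sesqInt 𝕜 μ f = L := by
    rw [sesqInt, dif_pos hex]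
    exact hL.limUnder_eq
  simpa [hsesq] using (tendsto_simpleInt_sub_simpleInt μ hμ hg hc).add hL

theorem sesqInt_eq_of_simpleInt_eq {μ ν : VectorMeasure T X} (hν : totalVar ν ≠ ⊤)
    (Φ : SimpleFunc T X → SimpleFunc T X) (hΦ : ∀ g, simpleInt 𝕜 μ g = simpleInt 𝕜 ν (Φ g))
    {f F : T → X} (hf : ∃ g : ℕ → SimpleFunc T X, TendstoUniformly (fun n => ⇑(g n)) f atTop)
    (hΦF : ∀ g : ℕ → SimpleFunc T X, TendstoUniformly (fun n => ⇑(g n)) f atTop →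
      TendstoUniformly (fun n => ⇑(Φ (g n))) F atTop) :
    sesqInt 𝕜 μ f = sesqInt 𝕜 ν F := by
  rw [sesqInt, dif_pos hf]
  simp only [hΦ]
  exact (tendsto_simpleInt_sesqInt ν hν (hΦF _ hf.choose_spec)).limUnder_eq

end SimpleIntegral

theorem simpleInt_mapRange_adjoint_map {𝕜 S T X Y : Type*} [RCLike 𝕜] [MeasurableSpace S]
    [MeasurableSpace T] [NormedAddCommGroup X] [InnerProductSpace 𝕜 X] [CompleteSpace X]
    [NormedAddCommGroup Y] [InnerProductSpace 𝕜 Y] [CompleteSpace Y]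
    (ν : VectorMeasure T X) {ω : T → S} (hω : Measurable ω) (R : Y →L[𝕜] X)
    (g : SimpleFunc S Y) :
    simpleInt 𝕜 ((ν.map ω).mapRange (ContinuousLinearMap.adjoint R).toLinearMap.toAddMonoidHom
        (ContinuousLinearMap.adjoint R).continuous) g =
      simpleInt 𝕜 ν ((g.comp ω hω).map R) := by
  rw [simpleInt_map_eq_sum ν _ R (SimpleFunc.range_comp_subset_range g hω)]
  refine Finset.sum_congr rfl fun y _ => ?_
  change inner 𝕜 (ContinuousLinearMap.adjoint R (ν.map ω (g ⁻¹' {y}))) y = _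
  rw [VectorMeasure.map_apply ν hω (g.measurableSet_fiber y)]
  exact ContinuousLinearMap.adjoint_inner_left R _ _

/-- for Borel maps `ω_1, …, ω_M : T → T` and operators
`R_1, …, R_M ∈ L(X)`, the operator `𝓗(ν) = Σ_i R_i* ∘ (ω_i(ν))` on `X`-valued
measures of bounded variation satisfies, for every continuous `f : T → X`,
`∫ f d𝓗(ν) = ∫ (Σ_i R_i ∘ f ∘ ω_i) dν`. -/
theorem sesqInt_markov {𝕜 T X : Type*} [RCLike 𝕜] [MetricSpace T] [CompactSpace T]
    [MeasurableSpace T] [BorelSpace T]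
    [NormedAddCommGroup X] [InnerProductSpace 𝕜 X] [CompleteSpace X]
    (M : ℕ) (ω : Fin M → T → T) (hω : ∀ i, Measurable (ω i))
    (R : Fin M → X →L[𝕜] X)
    (ν : VectorMeasure T X) (hν : totalVar ν ≠ ⊤)
    (f : T → X) (hf : Continuous f) :
    sesqInt 𝕜
      (∑ i : Fin M,
        (ν.map (ω i)).mapRange
          (ContinuousLinearMap.adjoint (R i)).toLinearMap.toAddMonoidHom
          (ContinuousLinearMap.adjoint (R i)).continuous) f =
      sesqInt 𝕜 ν (fun t => ∑ i : Fin M, R i (f (ω i t))) := by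
  refine sesqInt_eq_of_simpleInt_eq hν (fun g => ∑ i, (g.comp (ω i) (hω i)).map (R i))
    (fun g => ?_) (exists_seq_simpleFunc_tendstoUniformly hf) fun g hg => ?_
  · rw [simpleInt_finset_sum_measure, simpleInt_finset_sum]
    exact Finset.sum_congr rfl fun i _ => simpleInt_mapRange_adjoint_map ν (hω i) (R i) g
  · have := TendstoUniformly.finset_sum Finset.univ fun i _ =>
      (R i).uniformContinuous.comp_tendstoUniformly (hg.comp (ω i))
    simp only [SimpleFunc.coe_finset_sum, Finset.sum_fn]
    exact this
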